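/- Let n ∈ ℕ, let h_{-n}, …, h_n be nonnegative integers, let m ≥ 1 be an integer, and let 0 ≤ l ≤ n. Then (θ_{-n}^{h_{-n}} ∘ θ_{-n+1}^{h_{-n+1}} ∘ ⋯ ∘ θ_{n}^{h_n})(-n + l) ≤ m if and only if h_{-n} + h_{-n+1} + ⋯ + h_{-n+l} ≤ m + n - l. -/

import Mathlib

open Filter

/-- The `h`-right hand-side partial shift `θ_h : ℤ → ℤ`. -/
def theta (h : ℤ) : ℤ → ℤ := fun k => if k < h then k else k + 1

/-- The composition `θ_{-n}^{c(-n)} ∘ θ_{-n+1}^{c(-n+1)} ∘ ⋯ ∘ θ_{n}^{c(n)}`. -/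
def thetaProd (n : ℕ) (c : ℤ → ℕ) : ℤ → ℤ :=
  ((List.range (2 * n + 1)).map
    (fun i => (theta (-(n : ℤ) + i))^[c (-(n : ℤ) + i)])).foldr (· ∘ ·) id

/-- The `n`-th set of the right Følner sequence of `𝕁_ℤ`: maps of the form
`θ_{-n}^{h_{-n}} ∘ ⋯ ∘ θ_{n}^{h_n} ∘ τ^l` with `∑ h_i ≤ n²` and `-n ≤ l ≤ n`. -/
def FolnerSet (n : ℕ) : Set (ℤ → ℤ) :=
  {h | ∃ (c : ℤ → ℕ) (l : ℤ),
    (∑ i ∈ Finset.Icc (-(n : ℤ)) (n : ℤ), c i) ≤ n ^ 2 ∧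
    -(n : ℤ) ≤ l ∧ l ≤ (n : ℤ) ∧
    h = (thetaProd n c) ∘ (fun k => k + l)}


/-! The factors are applied from the largest threshold down. A point `x` is fixed by every
`θ_h` with `h > x`; once the first factor with `h ≤ x` has moved it, its image stays above every
remaining threshold, so each of those factors adds its full exponent. Hence the composition sends
`x` to `x + ∑_{h ≤ x} c h`, and at `x = -n + l` the claimed equivalence is linear arithmetic. -/

theorem theta_iterate_of_lt {h k : ℤ} (hk : k < h) (j : ℕ) : (theta h)^[j] k = k :=
  Function.iterate_fixed (by simp [theta, hk]) j

theorem theta_iterate_of_le {h k : ℤ} (hk : h ≤ k) (j : ℕ) : (theta h)^[j] k = k + j := by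
  induction j generalizing k with
  | zero => simp
  | succ j ih =>
    rw [Function.iterate_succ_apply, theta, if_neg hk.not_gt, ih (by omega)]
    push_cast
    ring

theorem foldr_comp_map_iterate_theta_apply {L : List ℤ} (hL : L.Pairwise (· < ·)) (c : ℤ → ℕ)
    (x : ℤ) :
    (L.map fun h => (theta h)^[c h]).foldr (· ∘ ·) id x =
      x + ∑ h ∈ L.toFinset with h ≤ x, (c h : ℤ) := by
  induction L with
  | nil => simp
  | cons h t ih =>
    obtain ⟨h_lt, ht⟩ := List.pairwise_cons.mp hL
    have h_notMem : h ∉ t.toFinset := fun hh => (h_lt h (List.mem_toFinset.mp hh)).false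
    simp only [List.map_cons, List.foldr_cons, Function.comp_apply, ih ht, List.toFinset_cons,
      Finset.filter_insert]
    by_cases hx : h ≤ x
    · have h_le : h ≤ x + ∑ h ∈ t.toFinset with h ≤ x, (c h : ℤ) :=
        hx.trans (le_add_of_nonneg_right (Finset.sum_nonneg fun _ _ => by positivity))
      rw [theta_iterate_of_le h_le, if_pos hx, Finset.sum_insert (by simp [h_notMem])]
      ring
    · have h_none : ∀ h' ∈ t.toFinset, ¬ h' ≤ x := fun h' hh' =>
        not_le.mpr ((not_le.mp hx).trans (h_lt h' (List.mem_toFinset.mp hh')))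
      rw [Finset.filter_false_of_mem h_none, if_neg hx]
      simpa using theta_iterate_of_lt (not_le.mp hx) (c h)

theorem thetaProd_apply (n : ℕ) (c : ℤ → ℕ) (x : ℤ) :
    thetaProd n c x = x + ∑ h ∈ Finset.Icc (-(n : ℤ)) n with h ≤ x, (c h : ℤ) := by
  have h_sorted : ((List.range (2 * n + 1)).map fun i : ℕ => -(n : ℤ) + i).Pairwise (· < ·) :=
    List.pairwise_map.mpr (List.pairwise_lt_range.imp fun hij => by simpa using hij)
  have h_toFinset : ((List.range (2 * n + 1)).map fun i : ℕ => -(n : ℤ) + i).toFinset =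
      Finset.Icc (-(n : ℤ)) n := by
    ext h
    simp only [List.mem_toFinset, List.mem_map, List.mem_range, Finset.mem_Icc]
    exact ⟨by rintro ⟨i, hi, rfl⟩; omega, fun hh => ⟨(h + n).toNat, by omega, by omega⟩⟩
  rw [← h_toFinset, ← foldr_comp_map_iterate_theta_apply h_sorted]
  -- `thetaProd` elaborates its list of thresholds as `do let a ← List.range _; pure ↑a`
  simp only [thetaProd, List.pure_def, List.bind_eq_flatMap, ← List.map_eq_flatMap, List.map_map]
  rfl

theorem stmt4_general (n : ℕ) (c : ℤ → ℕ) (m : ℕ) (l : ℕ) (hl : l ≤ n) :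
    thetaProd n c (-(n : ℤ) + l) ≤ (m : ℤ) ↔
      (∑ i ∈ Finset.Icc (-(n : ℤ)) (-(n : ℤ) + l), (c i : ℤ)) ≤ (m : ℤ) + n - l := by
  have h_filter : {h ∈ Finset.Icc (-(n : ℤ)) n | h ≤ -(n : ℤ) + l} =
      Finset.Icc (-(n : ℤ)) (-(n : ℤ) + l) := by
    ext h
    simp only [Finset.mem_filter, Finset.mem_Icc]
    omega
  rw [thetaProd_apply, h_filter]
  omega

theorem stmt4 (n : ℕ) (c : ℤ → ℕ) (m : ℕ) (hm : 1 ≤ m) (l : ℕ) (hl : l ≤ n) :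
    thetaProd n c (-(n : ℤ) + l) ≤ (m : ℤ) ↔
      (∑ i ∈ Finset.Icc (-(n : ℤ)) (-(n : ℤ) + l), (c i : ℤ)) ≤ (m : ℤ) + n - l :=
  stmt4_general n c m l hl
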